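/- arXiv:2006.11251 — 2 statements merged into one kernel-verified Lean document; each statement's English description precedes it below -/
import Mathlib

section
/- Injectivity Lemma. Let a multiplicative algebraic halving datum satisfy, in place of the degree condition (DC), only the weak degree condition (DC⁻): for every i and every x ∈ ℋ i the polynomial r (σ i x) has degree at most i. Assume there exists n ∈ ℕ such that: (i) ℋ i = 0 for all i > n; (ii) Poincaré duality holds: for every k ≤ n and every nonzero x ∈ ℋ k there exists y ∈ ℋ (n - k) with x * y ≠ 0; (iii) ℬ j = 0 for all j > n; and (iv) localization holds: for every a ∈ A with r a = 0 there exists N ∈ ℕ with u^N * a = 0. Then the datum satisfies the degree condition (DC): for every i and every nonzero x ∈ ℋ i one has κ i x ≠ 0. -/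
/-!
Let `0 ≠ x ∈ ℋ i` with `κ i x = 0`, and pick a Poincaré dual partner `y ∈ ℋ (n - i)`,
`x * y ≠ 0`. Then `a = σ x * σ y ∈ 𝒜 (2n)`: the coefficients of `r a` at `m < n` lie in
`ℬ (2n - m) = 0`, while (DC⁻) together with `κ i x = 0` gives `deg r a < n`. So `r a = 0`, and
localization gives `u ^ N * a = 0`. Under the Leray–Hirsch isomorphism, multiplication by `u`
becomes the shift of the `ℕ`-index of the direct sum, which is injective; so `u` is regular and
`a = 0`. Applying `ρ` yields `x * y = 0`.
-/

open Polynomial DirectSum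

namespace DirectSum

variable (R : Type*) [Semiring R] {ι : Type*} [DecidableEq ι] (M : ι → Type*)
  [∀ i, AddCommMonoid (M i)] [∀ i, Module R (M i)]

def shiftSnd : (⨁ p : ι × ℕ, M p.1) →ₗ[R] ⨁ p : ι × ℕ, M p.1 :=
  toModule R _ _ fun p => lof R (ι × ℕ) (fun q => M q.1) (p.1, p.2 + 1)

def unshiftSnd : (⨁ p : ι × ℕ, M p.1) →ₗ[R] ⨁ p : ι × ℕ, M p.1 :=
  toModule R _ _ fun
    | (_, 0) => 0
    | (i, m + 1) => lof R (ι × ℕ) (fun q => M q.1) (i, m)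

theorem unshiftSnd_comp_shiftSnd : unshiftSnd R M ∘ₗ shiftSnd R M = LinearMap.id :=
  linearMap_ext R fun _ => by
    ext
    simp [shiftSnd, unshiftSnd, toModule_lof]

theorem shiftSnd_injective : Function.Injective (shiftSnd R M) :=
  Function.LeftInverse.injective (g := unshiftSnd R M)
    (LinearMap.congr_fun (unshiftSnd_comp_shiftSnd R M))

end DirectSum

section LerayHirsch

variable {R : Type*} [CommSemiring R] {A : Type*} [Semiring A] [Algebra R A]
  {ι : Type*} [DecidableEq ι] {M : ι → Type*}
  [∀ i, AddCommMonoid (M i)] [∀ i, Module R (M i)]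

def lerayHirschMap (f : ∀ i, M i →ₗ[R] A) (u : A) : (⨁ p : ι × ℕ, M p.1) →ₗ[R] A :=
  toModule R (ι × ℕ) A fun p => (LinearMap.mulRight R (u ^ p.2)).comp (f p.1)

theorem lerayHirschMap_shiftSnd (f : ∀ i, M i →ₗ[R] A) (u : A)
    (w : ⨁ p : ι × ℕ, M p.1) :
    lerayHirschMap f u (shiftSnd R M w) = lerayHirschMap f u w * u := by
  induction w using DirectSum.induction_on with
  | zero => simp
  | of p c =>
    rw [← lof_eq_of R]
    simp [lerayHirschMap, shiftSnd, toModule_lof, pow_succ, mul_assoc]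
  | add w₁ w₂ h₁ h₂ => simp only [map_add, h₁, h₂, add_mul]

theorem isRightRegular_of_bijective_lerayHirschMap {f : ∀ i, M i →ₗ[R] A} {u : A}
    (h : Function.Bijective (lerayHirschMap f u)) : IsRightRegular u := by
  intro b c hbc
  obtain ⟨v, rfl⟩ := h.2 b
  obtain ⟨w, rfl⟩ := h.2 c
  have hshift : lerayHirschMap f u (shiftSnd R M v) = lerayHirschMap f u (shiftSnd R M w) := by
    simpa only [lerayHirschMap_shiftSnd] using hbc
  rw [shiftSnd_injective R M (h.1 hshift)]

end LerayHirsch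

namespace Polynomial

variable {R : Type*} [Semiring R] {p q : R[X]} {i j : ℕ}

theorem degree_lt_of_degree_le_of_coeff_eq_zero (hp : p.degree ≤ i) (hi : p.coeff i = 0) :
    p.degree < i :=
  (degree_lt_iff_coeff_zero p i).2 fun m hm =>
    hm.eq_or_lt.elim (· ▸ hi) fun h =>
      coeff_eq_zero_of_degree_lt (hp.trans_lt (by exact_mod_cast h))

theorem degree_mul_lt_of_lt_of_le (hp : p.degree < i) (hq : q.degree ≤ j) :
    (p * q).degree < ↑(i + j) :=
  calc (p * q).degree ≤ p.degree + j := (degree_mul_le p q).trans (by gcongr)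
    _ < i + j := WithBot.add_lt_add_right WithBot.coe_ne_bot hp
    _ = ↑(i + j) := by norm_cast

theorem eq_zero_of_degree_lt_of_coeff_eq_zero {n : ℕ} (hp : p.degree < n)
    (hcoeff : ∀ m < n, p.coeff m = 0) : p = 0 :=
  ext fun m => (lt_or_ge m n).elim (hcoeff m) fun h =>
    coeff_eq_zero_of_degree_lt (hp.trans_le (by exact_mod_cast h))

end Polynomial

theorem injectivity_lemma_general
    (R : Type) [Field R]
    (A : Type) [CommRing A] [Algebra R A]
    (𝒜 : ℕ → Submodule R A) [GradedAlgebra 𝒜]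
    (u : A)
    (B : Type) [CommRing B] [Algebra R B]
    (ℬ : ℕ → Submodule R B)
    (H : Type) [CommRing H] [Algebra R H]
    (ℋ : ℕ → Submodule R H)
    (σ : ∀ i, ℋ i →ₗ[R] A)
    (hσ : ∀ i (x : ℋ i), σ i x ∈ 𝒜 (2 * i))
    (hLH : Function.Bijective
      (DirectSum.toModule R (ℕ × ℕ) A
        fun p => (LinearMap.mulRight R (u ^ p.2)).comp (σ p.1)))
    (ρ : A →ₐ[R] H)
    (hρ : ∀ i (x : ℋ i), ρ (σ i x) = (x : H))
    (r : A →ₐ[R] Polynomial B)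
    (hrmem : ∀ n, ∀ a ∈ 𝒜 n, ∀ m, (r a).coeff m ∈ ℬ (n - m))
    -- weak degree condition (DC⁻)
    (hDCminus : ∀ i (x : ℋ i), (r (σ i x)).degree ≤ (i : WithBot ℕ))
    (n : ℕ)
    -- (i) `ℋ i = 0` for `i > n`
    (hHtop : ∀ i, n < i → ℋ i = ⊥)
    -- (ii) Poincaré duality
    (hPD : ∀ k, k ≤ n → ∀ x ∈ ℋ k, x ≠ 0 → ∃ y ∈ ℋ (n - k), x * y ≠ 0)
    -- (iii) `ℬ j = 0` for `j > n`
    (hBtop : ∀ j, n < j → ℬ j = ⊥)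
    -- (iv) localization
    (hloc : ∀ a : A, r a = 0 → ∃ N : ℕ, u ^ N * a = 0) :
    ∀ i (x : ℋ i), (x : H) ≠ 0 → (r (σ i x)).coeff i ≠ 0 := by
  intro i x hx hκ
  have hi : i ≤ n := le_of_not_gt fun h => hx (by simpa [hHtop i h] using x.2)
  obtain ⟨y, hy, hxy⟩ := hPD i hi x x.2 hx
  set a := σ i x * σ (n - i) ⟨y, hy⟩
  have ha : a ∈ 𝒜 (2 * n) := by
    simpa [show 2 * i + 2 * (n - i) = 2 * n by omega] using
      SetLike.mul_mem_graded (hσ i x) (hσ (n - i) ⟨y, hy⟩)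
  have hra : r a = 0 := by
    refine eq_zero_of_degree_lt_of_coeff_eq_zero (n := n) ?_ fun m hm => ?_
    · simpa only [Nat.add_sub_cancel' hi, ← map_mul] using degree_mul_lt_of_lt_of_le
        (degree_lt_of_degree_le_of_coeff_eq_zero (hDCminus i x) hκ) (hDCminus (n - i) ⟨y, hy⟩)
    · simpa [hBtop (2 * n - m) (by omega)] using hrmem _ a ha m
  obtain ⟨N, hN⟩ := hloc a hra
  have ha0 : a = 0 :=
    (isRightRegular_of_bijective_lerayHirschMap hLH).pow N (by simpa [mul_comm] using hN)
  exact hxy (by simpa [a, hρ] using congrArg ρ ha0)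

/-- **Injectivity Lemma.** A multiplicative algebraic halving datum satisfying
only the weak degree condition (DC⁻), together with (i) vanishing of `ℋ i` for
`i > n`, (ii) Poincaré duality in formal dimension `n`, (iii) vanishing of
`ℬ j` for `j > n`, and (iv) localization for `r`, satisfies the degree
condition (DC): `κ i x := (r (σ i x)).coeff i` is nonzero for nonzero `x`. -/
theorem injectivity_lemma
    (R : Type) [Field R]
    (A : Type) [CommRing A] [Algebra R A]
    (𝒜 : ℕ → Submodule R A) [GradedAlgebra 𝒜]
    (u : A) (hu : u ∈ 𝒜 1)
    (B : Type) [CommRing B] [Algebra R B]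
    (ℬ : ℕ → Submodule R B) [GradedAlgebra ℬ]
    (H : Type) [CommRing H] [Algebra R H]
    (ℋ : ℕ → Submodule R H) [GradedAlgebra ℋ]
    (σ : ∀ i, ℋ i →ₗ[R] A)
    (hσ : ∀ i (x : ℋ i), σ i x ∈ 𝒜 (2 * i))
    (hLH : Function.Bijective
      (DirectSum.toModule R (ℕ × ℕ) A
        fun p => (LinearMap.mulRight R (u ^ p.2)).comp (σ p.1)))
    (ρ : A →ₐ[R] H)
    (hρ : ∀ i (x : ℋ i), ρ (σ i x) = (x : H))
    (r : A →ₐ[R] Polynomial B)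
    (hru : r u = Polynomial.X)
    (hrmem : ∀ n, ∀ a ∈ 𝒜 n, ∀ m, (r a).coeff m ∈ ℬ (n - m))
    (hrtop : ∀ n, ∀ a ∈ 𝒜 n, ∀ m, n < m → (r a).coeff m = 0)
    -- weak degree condition (DC⁻)
    (hDCminus : ∀ i (x : ℋ i), (r (σ i x)).degree ≤ (i : WithBot ℕ))
    (n : ℕ)
    -- (i) `ℋ i = 0` for `i > n`
    (hHtop : ∀ i, n < i → ℋ i = ⊥)
    -- (ii) Poincaré duality
    (hPD : ∀ k, k ≤ n → ∀ x ∈ ℋ k, x ≠ 0 → ∃ y ∈ ℋ (n - k), x * y ≠ 0)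
    -- (iii) `ℬ j = 0` for `j > n`
    (hBtop : ∀ j, n < j → ℬ j = ⊥)
    -- (iv) localization
    (hloc : ∀ a : A, r a = 0 → ∃ N : ℕ, u ^ N * a = 0) :
    ∀ i (x : ℋ i), (x : H) ≠ 0 → (r (σ i x)).coeff i ≠ 0 :=
  injectivity_lemma_general R A 𝒜 u B ℬ H ℋ σ hσ hLH ρ hρ r hrmem hDCminus n hHtop hPD hBtop hloc
end

section
/- If the eigenvalues of a complex matrix are distinct and contain no complex conjugate pairs, then the eigenvalues of the matrix viewed as a real linear map are also distinct: for every n ∈ ℕ and A ∈ Matrix (Fin n) (Fin n) ℂ, if A.charpoly is squarefree (A has n distinct complex eigenvalues) and for all complex roots λ, μ of A.charpoly one has λ ≠ conj μ, then the characteristic polynomial of the realification ℜ(A), mapped to ℂ[X] via algebraMap ℝ ℂ, is squarefree; i.e., ℜ(A) has 2n distinct complex eigenvalues. -/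
/-!
Over `ℂ`, the realification of `A` is similar to the block-diagonal matrix `diag (conj A, A)`:
conjugate by the change of basis `(x, y) ↦ (x - i y, x + i y)` (up to a factor 2). Hence its characteristic
polynomial is `conj (χ_A) * χ_A`. Both factors are squarefree, and over an algebraically closed
field they are coprime unless they share a root, which would be a pair of eigenvalues `λ = conj μ`.
-/

open Matrix Polynomial Complex

namespace Matrix

variable {m n : Type*}

def realify (A : Matrix m n ℂ) : Matrix (m ⊕ m) (n ⊕ n) ℝ :=
  fromBlocks (A.map re) (-(A.map im)) (A.map im) (A.map re)

section ChangeOfBasis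

variable (m) [DecidableEq m]

def realifyBasis : Matrix (m ⊕ m) (m ⊕ m) ℂ :=
  fromBlocks 1 1 (I • 1) (-I • 1)

noncomputable def realifyBasisInv : Matrix (m ⊕ m) (m ⊕ m) ℂ :=
  fromBlocks ((2 : ℂ)⁻¹ • 1) (-(I / 2) • 1) ((2 : ℂ)⁻¹ • 1) ((I / 2) • 1)

variable [Fintype m]

theorem realifyBasisInv_mul_realifyBasis : realifyBasisInv m * realifyBasis m = 1 := by
  simp only [realifyBasis, realifyBasisInv, fromBlocks_multiply, ← fromBlocks_one]
  congr 1 <;> ext i j <;> by_cases h : i = j <;> simp [h, one_apply] <;> ring_nf <;> norm_num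

variable {m} [Fintype n] [DecidableEq n]

theorem realify_map_eq (A : Matrix m n ℂ) :
    (realify A).map (algebraMap ℝ ℂ) =
      realifyBasis m * fromBlocks (A.map (starRingEnd ℂ)) 0 0 A * realifyBasisInv n := by
  simp only [realify, realifyBasis, realifyBasisInv, fromBlocks_multiply, fromBlocks_map]
  congr 1 <;> ext i j <;> apply Complex.ext <;> simp <;> ring

end ChangeOfBasis

theorem charpoly_realify [Fintype m] [DecidableEq m] (A : Matrix m m ℂ) :
    (realify A).charpoly.map (algebraMap ℝ ℂ) = A.charpoly.map (starRingEnd ℂ) * A.charpoly := by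
  rw [← charpoly_map, realify_map_eq, charpoly_mul_comm, ← mul_assoc,
    realifyBasisInv_mul_realifyBasis, one_mul, charpoly_fromBlocks_zero₂₁, charpoly_map]

end Matrix

namespace Polynomial

theorem squarefree_map_mul_self {K : Type*} [Field K] [IsAlgClosed K] {σ : K ≃+* K} {p : K[X]}
    (hp : Squarefree p) (hroots : ∀ l m : K, p.IsRoot l → p.IsRoot m → l ≠ σ m) :
    Squarefree (p.map (σ : K →+* K) * p) := by
  rw [← PerfectField.separable_iff_squarefree] at hp ⊢
  refine hp.map.mul hp <| (isCoprime_iff_aeval_ne_zero_of_isAlgClosed K K _ _).2 fun z => ?_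
  obtain ⟨w, rfl⟩ := σ.surjective z
  simp only [coe_aeval_eq_eval, ← not_and_or, ← IsRoot.def]
  rintro ⟨hσw, hσw'⟩
  exact hroots _ _ hσw' ((isRoot_map_iff (f := (σ : K →+* K)) σ.injective).1 hσw) rfl

end Polynomial

/-- If the eigenvalues of a complex matrix are distinct (its characteristic
polynomial is squarefree) and contain no complex conjugate pairs, then the
eigenvalues of the matrix viewed as a real linear map are also distinct:
the characteristic polynomial of the realification, viewed in `ℂ[X]`, is
squarefree. -/
theorem realification_charpoly_squarefree
    (n : ℕ) (A : Matrix (Fin n) (Fin n) ℂ)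
    (h1 : Squarefree A.charpoly)
    (h2 : ∀ l m : ℂ, A.charpoly.IsRoot l → A.charpoly.IsRoot m →
      l ≠ (starRingEnd ℂ) m) :
    Squarefree
      (((Matrix.fromBlocks (A.map Complex.re) (-(A.map Complex.im))
          (A.map Complex.im) (A.map Complex.re)).charpoly).map (algebraMap ℝ ℂ)) := by
  rw [← realify, charpoly_realify]
  exact squarefree_map_mul_self (σ := starRingAut) h1 h2
end
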